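/- With agents sorted v_1 ≥ ... ≥ v_n > 0 and k = max{l : Σ_{i=1}^l B_i ≤ v_l·Σ_{i=l+1}^n Γ_i}, if Σ_{i=1}^k B_i ≤ v_{k+1}·Σ_{i=k+1}^n Γ_i, then the mechanism's welfare equals MLW(x) = v_{k+1}·Σ_{i=k+1}^n Γ_i + Σ_{i=1}^k v_i·Γ_i ≥ v_{k+1}·Σ_{i=k+1}^n Γ_i. -/

import Mathlib

open Finset

/-! Agents `i ≤ k` value the good at least at the price `q = v_{k+1}`, so their budget
constraint binds and each contributes `v_iΓ_i + B_i`; agents `i ≥ k + 2` sell everything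
and contribute `0`. Agent `k + 1` holds the residual supply, worth
`v_{k+1}·∑_{i≥k+2} Γ_i − ∑_{i≤k} B_i`, which is below `B_{k+1}` by maximality of `k`, so
this value is what it contributes. Summing, the budgets `B_1, …, B_k` cancel. -/

lemma sum_Icc_one_eq_add_add_sum {M : Type*} [AddCommMonoid M] (f : ℕ → M) {k n : ℕ}
    (hkn : k + 1 ≤ n) :
    ∑ i ∈ Icc 1 n, f i = ∑ i ∈ Icc 1 k, f i + f (k + 1) + ∑ i ∈ Icc (k + 2) n, f i := by
  have hIcc : ∀ a b : ℕ, Icc (a + 1) b = Ioc a b := Icc_add_one_left_eq_Ioc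
  rw [hIcc 0 n, hIcc 0 k, hIcc (k + 1) n, add_assoc, add_sum_Ioc_eq_sum_Icc hkn, hIcc k n,
    sum_Ioc_consecutive _ (Nat.zero_le k) (by omega)]

lemma sum_Icc_eq_add_sum_Icc_succ {M : Type*} [AddCommMonoid M] (f : ℕ → M) {a b : ℕ}
    (hab : a ≤ b) : ∑ i ∈ Icc a b, f i = f a + ∑ i ∈ Icc (a + 1) b, f i := by
  rw [Icc_add_one_left_eq_Ioc, add_sum_Ioc_eq_sum_Icc hab]

lemma min_mul_div_eq_right {w q b : ℝ} (hb : 0 ≤ b) (hq : 0 < q) (hqw : q ≤ w) :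
    min (w * (b / q)) b = b := by
  refine min_eq_right ?_
  calc b = q * (b / q) := (mul_div_cancel₀ b hq.ne').symm
    _ ≤ w * (b / q) := mul_le_mul_of_nonneg_right hqw (div_nonneg hb hq.le)

lemma mul_add_min_mul_neg_eq_zero {w g b : ℝ} (hw : 0 ≤ w) (hg : 0 ≤ g) (hb : 0 ≤ b) :
    w * g + min (w * -g) b = 0 := by
  rw [min_eq_left ((mul_nonpos_of_nonneg_of_nonpos hw (neg_nonpos.2 hg)).trans hb)]
  ring

theorem stmt_15_general (n k : ℕ) (v B Γ : ℕ → ℝ)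
    (hv : ∀ i ∈ Icc 1 n, 0 < v i)
    (hsort : ∀ i ∈ Icc 1 n, ∀ j ∈ Icc 1 n, i ≤ j → v j ≤ v i)
    (hB : ∀ i ∈ Icc 1 n, 0 ≤ B i) (hΓ : ∀ i ∈ Icc 1 n, 0 ≤ Γ i)
    (hkn : k + 1 ≤ n)
    (hkmax : ∀ l, 1 ≤ l → l ≤ n →
      (∑ i ∈ Icc 1 l, B i ≤ v l * ∑ i ∈ Icc (l+1) n, Γ i) → l ≤ k)
    (q : ℝ) (hq : q = v (k+1))
    (x : ℕ → ℝ)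
    (hx1 : ∀ i, 1 ≤ i → i ≤ k → x i = B i / q)
    (hx2 : x (k+1) = ∑ i ∈ Icc (k+2) n, Γ i - ∑ i ∈ Icc 1 k, B i / q)
    (hx3 : ∀ i, k+2 ≤ i → i ≤ n → x i = -Γ i) :
    ∑ i ∈ Icc 1 n, (v i * Γ i + min (v i * x i) (B i))
      = v (k+1) * ∑ i ∈ Icc (k+1) n, Γ i + ∑ i ∈ Icc 1 k, v i * Γ i ∧
    v (k+1) * ∑ i ∈ Icc (k+1) n, Γ i ≤
      v (k+1) * ∑ i ∈ Icc (k+1) n, Γ i + ∑ i ∈ Icc 1 k, v i * Γ i := by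
  subst hq
  have mem {i : ℕ} (h1 : 1 ≤ i) (h2 : i ≤ n) : i ∈ Icc 1 n := mem_Icc.2 ⟨h1, h2⟩
  have hq : 0 < v (k + 1) := hv _ (mem (by omega) hkn)
  have hbuyers : ∀ i ∈ Icc 1 k, v i * Γ i + min (v i * x i) (B i) = v i * Γ i + B i := by
    intro i hi
    obtain ⟨h1, h2⟩ := mem_Icc.1 hi
    rw [hx1 i h1 h2, min_mul_div_eq_right (hB i (mem h1 (by omega))) hq
      (hsort _ (mem h1 (by omega)) _ (mem (by omega) hkn) (by omega))]
  have hsellers : ∀ i ∈ Icc (k + 2) n, v i * Γ i + min (v i * x i) (B i) = 0 := by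
    intro i hi
    obtain ⟨h1, h2⟩ := mem_Icc.1 hi
    have hi' := mem (by omega) h2
    rw [hx3 i h1 h2]
    exact mul_add_min_mul_neg_eq_zero (hv i hi').le (hΓ i hi') (hB i hi')
  have hresidual : v (k + 1) * x (k + 1)
      = v (k + 1) * ∑ i ∈ Icc (k + 2) n, Γ i - ∑ i ∈ Icc 1 k, B i := by
    rw [hx2, ← sum_div, mul_sub, mul_div_cancel₀ _ hq.ne']
  have hmarginal : v (k + 1) * x (k + 1) < B (k + 1) := by
    have := mt (hkmax (k + 1) (by omega) hkn) (by omega)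
    rw [sum_Icc_succ_top (by omega), not_le] at this
    linarith
  have hbuyers_nonneg : 0 ≤ ∑ i ∈ Icc 1 k, v i * Γ i := sum_nonneg fun i hi ↦ by
    obtain ⟨h1, h2⟩ := mem_Icc.1 hi
    exact mul_nonneg (hv i (mem h1 (by omega))).le (hΓ i (mem h1 (by omega)))
  refine ⟨?_, le_add_of_nonneg_right hbuyers_nonneg⟩
  rw [sum_Icc_one_eq_add_add_sum _ hkn, sum_congr rfl hbuyers, sum_congr rfl hsellers,
    min_eq_left hmarginal.le, hresidual, sum_Icc_eq_add_sum_Icc_succ Γ hkn, sum_add_distrib,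
    sum_const_zero]
  ring

/-- Case `∑_{i=1}^k B_i ≤ v_{k+1}·∑_{i=k+1}^n Γ_i` of the Differential Pricing
Mechanism (so `q = v_{k+1}`): the mechanism's welfare equals
`v_{k+1}·∑_{i=k+1}^n Γ_i + ∑_{i=1}^k v_iΓ_i ≥ v_{k+1}·∑_{i=k+1}^n Γ_i`. -/
theorem stmt_15 (n k : ℕ) (v B Γ : ℕ → ℝ)
    (hv : ∀ i ∈ Icc 1 n, 0 < v i)
    (hsort : ∀ i ∈ Icc 1 n, ∀ j ∈ Icc 1 n, i ≤ j → v j ≤ v i)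
    (hB : ∀ i ∈ Icc 1 n, 0 ≤ B i) (hΓ : ∀ i ∈ Icc 1 n, 0 ≤ Γ i)
    (hk1 : 1 ≤ k) (hkn : k + 1 ≤ n)
    (hkle : ∑ i ∈ Icc 1 k, B i ≤ v k * ∑ i ∈ Icc (k+1) n, Γ i)
    (hkmax : ∀ l, 1 ≤ l → l ≤ n →
      (∑ i ∈ Icc 1 l, B i ≤ v l * ∑ i ∈ Icc (l+1) n, Γ i) → l ≤ k)
    (hcase : ∑ i ∈ Icc 1 k, B i ≤ v (k+1) * ∑ i ∈ Icc (k+1) n, Γ i)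
    (q : ℝ) (hq : q = v (k+1))
    (x : ℕ → ℝ)
    (hx1 : ∀ i, 1 ≤ i → i ≤ k → x i = B i / q)
    (hx2 : x (k+1) = ∑ i ∈ Icc (k+2) n, Γ i - ∑ i ∈ Icc 1 k, B i / q)
    (hx3 : ∀ i, k+2 ≤ i → i ≤ n → x i = -Γ i) :
    ∑ i ∈ Icc 1 n, (v i * Γ i + min (v i * x i) (B i))
      = v (k+1) * ∑ i ∈ Icc (k+1) n, Γ i + ∑ i ∈ Icc 1 k, v i * Γ i ∧
    v (k+1) * ∑ i ∈ Icc (k+1) n, Γ i ≤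
      v (k+1) * ∑ i ∈ Icc (k+1) n, Γ i + ∑ i ∈ Icc 1 k, v i * Γ i :=
  stmt_15_general n k v B Γ hv hsort hB hΓ hkn hkmax q hq x hx1 hx2 hx3
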